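/- Let F be a free group with normal subgroup R and G = F/R, n ≥ 1. Then the subgroup (R ∩ (1 + rf + f^n)) / (γ_2(R)(R ∩ γ_n(F))) is central in (F ∩ (1 + rf + f^n)) / (γ_2(R)γ_n(F)). -/

import Mathlib

/-!
Let `r_H = (H - 1)ℤ[F]`, and let `γ₁ = F, γ₂, …` be the lower central series, so that
`(⊤ : Subgroup F).lowerCentralSeries k` is `γ_{k+1}`. The identity
`(g - 1)(w - 1) = (gwg⁻¹ - 1)(g - 1) + ([g, w] - 1)w` gives `f·r_H ⊆ r_H·f + r_{[F, H]}` for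
normal `H`, and by induction `fⁿ·r ⊆ rf + r_{R ∩ γ_{n+1}}`. Since
`[u, v] - 1 = ((u - 1)(v - 1) - (v - 1)(u - 1))·(vu)⁻¹` with `u - 1 ∈ r` and `v - 1 ∈ rf + fⁿ`,
this puts `[u, v] - 1` in `rf + r_{R ∩ γ_{n+1}}`. Finally, for a transversal `t` of `R`, the
`ℤ`-linear map `ℤ[F] → R_ab`, `g ↦ g·t(gR)⁻¹`, kills `rf`, maps `r_H` into the image of `H` and
sends `z - 1` to the class of `z` for `z ∈ R`; hence `[u, v] ∈ [R, R](R ∩ γ_{n+1})`.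
-/

/-- The augmentation homomorphism of the integral group ring `ℤ[G]`. -/
noncomputable def aug (G : Type*) [Group G] : MonoidAlgebra ℤ G →ₐ[ℤ] ℤ :=
  MonoidAlgebra.lift ℤ ℤ G 1

/-- The augmentation ideal of `ℤ[G]`, viewed as a `ℤ`-submodule of `ℤ[G]`. -/
noncomputable def augIdeal (G : Type*) [Group G] : Submodule ℤ (MonoidAlgebra ℤ G) :=
  (RingHom.ker (aug G).toRingHom).restrictScalars ℤ

/-- The relation ideal `r = (R - 1)·ℤ[G]` associated to a subgroup `R ≤ G`. -/
noncomputable def relIdeal (G : Type*) [Group G] (R : Subgroup G) :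
    Submodule ℤ (MonoidAlgebra ℤ G) :=
  Submodule.span ℤ {x | ∃ ρ ∈ R, ∃ a : MonoidAlgebra ℤ G,
    x = (MonoidAlgebra.of ℤ G ρ - 1) * a}

open scoped commutatorElement

open MonoidAlgebra Submodule

section GroupRing

variable {F : Type*} [Group F]

lemma mem_augIdeal_iff {x : MonoidAlgebra ℤ F} : x ∈ augIdeal F ↔ aug F x = 0 := by
  simp [augIdeal, RingHom.mem_ker, Submodule.restrictScalars_mem]

lemma aug_of (g : F) : aug F (of ℤ F g) = 1 := by
  simp [aug]

lemma of_sub_one_mem_augIdeal (g : F) : of ℤ F g - 1 ∈ augIdeal F := by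
  rw [mem_augIdeal_iff, map_sub, map_one, aug_of, sub_self]

lemma augIdeal_mul_top : augIdeal F * ⊤ ≤ augIdeal F :=
  mul_le.mpr fun x hx y _ => by
    rw [mem_augIdeal_iff] at hx ⊢
    rw [map_mul, hx, zero_mul]

lemma augIdeal_le_span_of_sub_one :
    augIdeal F ≤ span ℤ (Set.range fun g : F => of ℤ F g - 1) := by
  intro x hx
  have sub_aug_smul_one_mem : ∀ y : MonoidAlgebra ℤ F,
      y - aug F y • 1 ∈ span ℤ (Set.range fun g : F => of ℤ F g - 1) := by
    intro y
    induction y using MonoidAlgebra.induction_on with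
    | of g =>
      rw [aug_of, one_smul]
      exact subset_span ⟨g, rfl⟩
    | add y z hy hz =>
      convert add_mem hy hz using 1
      rw [map_add, add_smul]
      abel
    | smul c y hy =>
      convert smul_mem _ c hy using 1
      rw [map_smul, smul_eq_mul, mul_smul, smul_sub]
  simpa [mem_augIdeal_iff.mp hx] using sub_aug_smul_one_mem x

lemma of_sub_one_mem_relIdeal {H : Subgroup F} {w : F} (hw : w ∈ H) :
    of ℤ F w - 1 ∈ relIdeal F H :=
  subset_span ⟨w, hw, 1, (mul_one _).symm⟩

lemma relIdeal_mono {H K : Subgroup F} (h : H ≤ K) : relIdeal F H ≤ relIdeal F K :=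
  span_mono fun _ ⟨ρ, hρ, a, hx⟩ => ⟨ρ, h hρ, a, hx⟩

lemma relIdeal_mul_top (H : Subgroup F) : relIdeal F H * ⊤ ≤ relIdeal F H := by
  rw [relIdeal, ← span_univ, span_mul_span, span_le]
  rintro _ ⟨_, ⟨ρ, hρ, a, rfl⟩, b, -, rfl⟩
  exact subset_span ⟨ρ, hρ, a * b, mul_assoc _ _ _⟩

lemma relIdeal_mul_augIdeal_mul_top (H : Subgroup F) :
    relIdeal F H * augIdeal F * ⊤ ≤ relIdeal F H * augIdeal F := by
  rw [mul_assoc]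
  exact mul_le_mul' le_rfl augIdeal_mul_top

lemma sup_relIdeal_mul_top (R H : Subgroup F) :
    (relIdeal F R * augIdeal F ⊔ relIdeal F H) * ⊤ ≤
      relIdeal F R * augIdeal F ⊔ relIdeal F H := by
  rw [Submodule.sup_mul]
  exact sup_le_sup (relIdeal_mul_augIdeal_mul_top R) (relIdeal_mul_top H)

lemma of_sub_one_mul_of_sub_one (g w : F) :
    (of ℤ F g - 1) * (of ℤ F w - 1) =
      (of ℤ F (g * w * g⁻¹) - 1) * (of ℤ F g - 1) + (of ℤ F ⁅g, w⁆ - 1) * of ℤ F w := by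
  have hconj : of ℤ F (g * w * g⁻¹) * of ℤ F g = of ℤ F g * of ℤ F w := by
    rw [← map_mul, ← map_mul, inv_mul_cancel_right]
  have hcomm : of ℤ F ⁅g, w⁆ * of ℤ F w = of ℤ F (g * w * g⁻¹) := by
    rw [← map_mul, commutatorElement_def, inv_mul_cancel_right]
  calc (of ℤ F g - 1) * (of ℤ F w - 1) = of ℤ F g * of ℤ F w - of ℤ F g - of ℤ F w + 1 := by
        noncomm_ring
    _ = of ℤ F (g * w * g⁻¹) * of ℤ F g - of ℤ F (g * w * g⁻¹) - of ℤ F g + 1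
          + of ℤ F ⁅g, w⁆ * of ℤ F w - of ℤ F w := by
        rw [hconj, hcomm]
        abel
    _ = _ := by noncomm_ring

lemma augIdeal_mul_relIdeal_le (H : Subgroup F) [H.Normal] :
    augIdeal F * relIdeal F H ≤
      relIdeal F H * augIdeal F ⊔ relIdeal F ⁅(⊤ : Subgroup F), H⁆ := by
  refine (mul_le_mul' augIdeal_le_span_of_sub_one (le_refl (relIdeal F H))).trans ?_
  conv_lhs => rw [relIdeal]
  rw [span_mul_span, span_le]
  rintro _ ⟨_, ⟨g, rfl⟩, _, ⟨w, hw, a, rfl⟩, rfl⟩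
  dsimp only
  rw [SetLike.mem_coe, ← mul_assoc, of_sub_one_mul_of_sub_one, add_mul,
    mul_assoc (of ℤ F (g * w * g⁻¹) - 1), mul_assoc (of ℤ F ⁅g, w⁆ - 1)]
  exact add_mem
    (mem_sup_left (mul_mem_mul (of_sub_one_mem_relIdeal (‹H.Normal›.conj_mem w hw g))
      (augIdeal_mul_top (mul_mem_mul (of_sub_one_mem_augIdeal g) mem_top))))
    (mem_sup_right (subset_span
      ⟨⁅g, w⁆, Subgroup.commutator_mem_commutator (Subgroup.mem_top g) hw, _, rfl⟩))

lemma commutator_top_inf_lowerCentralSeries_le (H : Subgroup F) [H.Normal] (m : ℕ) :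
    ⁅(⊤ : Subgroup F), H ⊓ (⊤ : Subgroup F).lowerCentralSeries m⁆ ≤
      H ⊓ (⊤ : Subgroup F).lowerCentralSeries (m + 1) := by
  refine le_inf (Subgroup.commutator_le_right _ _ |>.trans inf_le_left) ?_
  rw [Subgroup.commutator_comm, Subgroup.lowerCentralSeries_succ]
  exact Subgroup.commutator_mono inf_le_right le_rfl

lemma augIdeal_pow_mul_relIdeal_le (H : Subgroup F) [H.Normal] (m : ℕ) :
    augIdeal F ^ m * relIdeal F H ≤
      relIdeal F H * augIdeal F ⊔ relIdeal F (H ⊓ (⊤ : Subgroup F).lowerCentralSeries m) := by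
  induction m with
  | zero => simp
  | succ m ih =>
    set K := H ⊓ (⊤ : Subgroup F).lowerCentralSeries m
    have hfrf : augIdeal F * (relIdeal F H * augIdeal F) ≤ relIdeal F H * augIdeal F := by
      rw [← mul_assoc]
      refine (mul_le_mul' (augIdeal_mul_relIdeal_le H) le_rfl).trans ?_
      rw [Submodule.sup_mul]
      refine sup_le ((mul_le_mul' le_rfl le_top).trans (relIdeal_mul_augIdeal_mul_top H)) ?_
      exact mul_le_mul' (relIdeal_mono (Subgroup.commutator_le_right _ _)) le_rfl
    have hfrK : augIdeal F * relIdeal F K ≤ relIdeal F H * augIdeal F ⊔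
        relIdeal F (H ⊓ (⊤ : Subgroup F).lowerCentralSeries (m + 1)) :=
      (augIdeal_mul_relIdeal_le K).trans <| sup_le_sup
        (mul_le_mul' (relIdeal_mono inf_le_left) le_rfl)
        (relIdeal_mono (commutator_top_inf_lowerCentralSeries_le H m))
    rw [pow_succ', mul_assoc]
    refine (mul_le_mul' le_rfl ih).trans ?_
    rw [Submodule.mul_sup]
    exact sup_le (hfrf.trans le_sup_left) hfrK

lemma of_commutatorElement_sub_one (u v : F) :
    of ℤ F ⁅u, v⁆ - 1 =
      ((of ℤ F u - 1) * (of ℤ F v - 1) - (of ℤ F v - 1) * (of ℤ F u - 1)) *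
        of ℤ F (v * u)⁻¹ := by
  have hcomm : of ℤ F u * of ℤ F v * of ℤ F (v * u)⁻¹ = of ℤ F ⁅u, v⁆ := by
    rw [← map_mul, ← map_mul, commutatorElement_def, mul_inv_rev, ← mul_assoc]
  have hone : of ℤ F v * of ℤ F u * of ℤ F (v * u)⁻¹ = 1 := by
    rw [← map_mul, ← map_mul, mul_inv_cancel, map_one]
  calc of ℤ F ⁅u, v⁆ - 1
      = (of ℤ F u * of ℤ F v - of ℤ F v * of ℤ F u) * of ℤ F (v * u)⁻¹ := by
        rw [sub_mul, hcomm, hone]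
    _ = _ := by noncomm_ring

lemma of_commutatorElement_sub_one_mem {R : Subgroup F} [R.Normal] {n : ℕ} {u v : F}
    (hu : u ∈ R) (hv : of ℤ F v - 1 ∈ relIdeal F R * augIdeal F ⊔ augIdeal F ^ n) :
    of ℤ F ⁅u, v⁆ - 1 ∈
      relIdeal F R * augIdeal F ⊔ relIdeal F (R ⊓ (⊤ : Subgroup F).lowerCentralSeries n) := by
  have hvu : (relIdeal F R * augIdeal F ⊔ augIdeal F ^ n) * relIdeal F R ≤
      relIdeal F R * augIdeal F ⊔ relIdeal F (R ⊓ (⊤ : Subgroup F).lowerCentralSeries n) := by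
    rw [Submodule.sup_mul]
    refine sup_le ?_ (augIdeal_pow_mul_relIdeal_le R n)
    exact ((mul_le_mul' le_rfl le_top).trans (relIdeal_mul_augIdeal_mul_top R)).trans le_sup_left
  rw [of_commutatorElement_sub_one]
  refine sup_relIdeal_mul_top _ _ (mul_mem_mul (sub_mem (mem_sup_left ?_) ?_) mem_top)
  · exact mul_mem_mul (of_sub_one_mem_relIdeal hu) (of_sub_one_mem_augIdeal v)
  · exact hvu (mul_mem_mul hv (of_sub_one_mem_relIdeal hu))

end GroupRing

section RelationAbelianization

variable {F : Type*} [Group F] (R : Subgroup F) [R.Normal]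

noncomputable def mulInvOut (g : F) : R :=
  ⟨g * (QuotientGroup.mk g : F ⧸ R).out⁻¹,
    ‹R.Normal›.mem_comm (QuotientGroup.eq.mp (QuotientGroup.out_eq' _))⟩

lemma mulInvOut_mul {ρ : F} (hρ : ρ ∈ R) (g : F) :
    mulInvOut R (ρ * g) = ⟨ρ, hρ⟩ * mulInvOut R g := by
  have hmk : (QuotientGroup.mk (ρ * g) : F ⧸ R) = QuotientGroup.mk g := by
    rw [QuotientGroup.mk_mul, (QuotientGroup.eq_one_iff ρ).mpr hρ, one_mul]
  ext
  simp only [mulInvOut, hmk, Subgroup.coe_mul, mul_assoc]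

noncomputable def relAbelianize : MonoidAlgebra ℤ F →ₗ[ℤ] Additive (Abelianization R) :=
  (MonoidAlgebra.basis F ℤ).constr ℤ fun g => .ofMul (.of (mulInvOut R g))

lemma relAbelianize_of (g : F) :
    relAbelianize R (of ℤ F g) = .ofMul (.of (mulInvOut R g)) :=
  (MonoidAlgebra.basis F ℤ).constr_basis ℤ _ g

lemma relAbelianize_of_sub_one_mul {ρ : F} (hρ : ρ ∈ R) (x : MonoidAlgebra ℤ F) :
    relAbelianize R ((of ℤ F ρ - 1) * x) = aug F x • .ofMul (.of ⟨ρ, hρ⟩) := by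
  induction x using MonoidAlgebra.induction_on with
  | of g =>
    rw [sub_mul, one_mul, ← map_mul, map_sub, relAbelianize_of, relAbelianize_of, aug_of,
      one_smul, mulInvOut_mul R hρ, map_mul, ofMul_mul, add_sub_cancel_right]
  | add x y hx hy => rw [mul_add, map_add, hx, hy, map_add, add_smul]
  | smul c x hx => rw [mul_smul_comm, map_smul, hx, map_smul, smul_smul, smul_eq_mul]

lemma relAbelianize_of_sub_one {z : F} (hz : z ∈ R) :
    relAbelianize R (of ℤ F z - 1) = .ofMul (.of ⟨z, hz⟩) := by
  simpa using relAbelianize_of_sub_one_mul R hz 1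

lemma relIdeal_mul_augIdeal_le_ker :
    relIdeal F R * augIdeal F ≤ LinearMap.ker (relAbelianize R) := by
  refine (mul_le_mul' (le_refl (relIdeal F R)) augIdeal_le_span_of_sub_one).trans ?_
  rw [relIdeal, span_mul_span, span_le]
  rintro _ ⟨_, ⟨ρ, hρ, a, rfl⟩, _, ⟨g, rfl⟩, rfl⟩
  dsimp only
  rw [SetLike.mem_coe, LinearMap.mem_ker, mul_assoc, relAbelianize_of_sub_one_mul R hρ, map_mul,
    map_sub, aug_of, map_one, sub_self, mul_zero, zero_smul]

lemma relIdeal_le_comap_relAbelianize {H : Subgroup F} (hH : H ≤ R) :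
    relIdeal F H ≤ (Subgroup.toAddSubgroup ((H.subgroupOf R).map Abelianization.of)
      |>.toIntSubmodule).comap (relAbelianize R) := by
  rw [relIdeal, span_le]
  rintro _ ⟨w, hw, a, rfl⟩
  rw [SetLike.mem_coe, mem_comap, relAbelianize_of_sub_one_mul R (hH hw), ← SetLike.mem_coe,
    AddSubgroup.coe_toIntSubmodule, SetLike.mem_coe, Additive.mem_toAddSubgroup, toMul_zsmul,
    toMul_ofMul]
  exact zpow_mem (Subgroup.mem_map_of_mem _ (Subgroup.mem_subgroupOf.mpr hw)) _

theorem mem_commutator_sup_of_sub_one_mem {H : Subgroup F} (hH : H ≤ R) {z : F} (hz : z ∈ R)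
    (h : of ℤ F z - 1 ∈ relIdeal F R * augIdeal F ⊔ relIdeal F H) : z ∈ ⁅R, R⁆ ⊔ H := by
  obtain ⟨p, hp, q, hq, hpq⟩ := mem_sup.mp h
  have hzH : Abelianization.of ⟨z, hz⟩ ∈ (H.subgroupOf R).map Abelianization.of := by
    have hq' := relIdeal_le_comap_relAbelianize R hH hq
    rwa [mem_comap, ← zero_add (relAbelianize R q), ← relIdeal_mul_augIdeal_le_ker R hp,
      ← map_add, hpq, relAbelianize_of_sub_one] at hq'
  obtain ⟨w, hw, hwz⟩ := hzH
  have hzw : ⟨z, hz⟩ * w⁻¹ ∈ commutator R := by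
    rw [← Abelianization.ker_of, MonoidHom.mem_ker, map_mul, map_inv, hwz, mul_inv_cancel]
  have hzw' : z * (w : F)⁻¹ ∈ ⁅R, R⁆ :=
    R.map_subtype_commutator ▸ Subgroup.mem_map_of_mem R.subtype hzw
  simpa using mul_mem (Subgroup.mem_sup_left hzw') (Subgroup.mem_sup_right hw)

end RelationAbelianization

theorem dimensionQuotient_central_general (α : Type*) (R : Subgroup (FreeGroup α)) [R.Normal]
    (n : ℕ) (u v : FreeGroup α) (hu : u ∈ R)
    (hv : MonoidAlgebra.of ℤ (FreeGroup α) v - 1 ∈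
      relIdeal (FreeGroup α) R * augIdeal (FreeGroup α) ⊔ augIdeal (FreeGroup α) ^ n) :
    ⁅u, v⁆ ∈ ⁅R, R⁆ ⊔ (⊤ : Subgroup (FreeGroup α)).lowerCentralSeries (n - 1) := by
  have hR : ⁅u, v⁆ ∈ R :=
    Subgroup.commutator_le_left R ⊤ (Subgroup.commutator_mem_commutator hu (Subgroup.mem_top v))
  have h := mem_commutator_sup_of_sub_one_mem R inf_le_left hR
    (of_commutatorElement_sub_one_mem hu hv)
  exact sup_le_sup_left
    (inf_le_right.trans (Subgroup.lowerCentralSeries_antitone _ (n.sub_le 1))) _ h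

/-- For `G = F/R` and `n ≥ 1`, the subgroup `(R ∩ (1 + rf + f^n))/(γ_2(R)(R ∩ γ_n(F)))`
is central in `(F ∩ (1 + rf + f^n))/(γ_2(R)γ_n(F))`: any `u ∈ R ∩ (1 + rf + f^n)`
commutes with any `v ∈ F ∩ (1 + rf + f^n)` modulo `γ_2(R)γ_n(F)`. -/
theorem dimensionQuotient_central (α : Type*) (R : Subgroup (FreeGroup α)) [R.Normal]
    (n : ℕ) (hn : 1 ≤ n) (u v : FreeGroup α) (hu : u ∈ R)
    (hu' : MonoidAlgebra.of ℤ (FreeGroup α) u - 1 ∈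
      relIdeal (FreeGroup α) R * augIdeal (FreeGroup α) ⊔ augIdeal (FreeGroup α) ^ n)
    (hv : MonoidAlgebra.of ℤ (FreeGroup α) v - 1 ∈
      relIdeal (FreeGroup α) R * augIdeal (FreeGroup α) ⊔ augIdeal (FreeGroup α) ^ n) :
    ⁅u, v⁆ ∈ ⁅R, R⁆ ⊔ (⊤ : Subgroup (FreeGroup α)).lowerCentralSeries (n - 1) :=
  dimensionQuotient_central_general α R n u v hu hv
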